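/- arXiv:2602.22080 — 6 statements merged into one kernel-verified Lean document; each statement's English description precedes it below -/
import Mathlib

section
/- Let B be a two-sided skew brace. Then the elements of B ∗ B and the elements of B ∗ᵒᵖ B centralise each other in the additive group: for all a,b,c,d ∈ B, (a ∗ d) + (b ∗ᵒᵖ c) = (b ∗ᵒᵖ c) + (a ∗ d), where x ∗ y = -x + x·y - y and x ∗ᵒᵖ y = -y + x·y - x. -/
class SkewBrace (B : Type*) extends Group B, AddGroup B where
  one_eq_zero : (1 : B) = 0
  left_compat : ∀ a b c : B, a * (b + c) = a * b - a + a * c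

class TwoSidedSkewBrace (B : Type*) extends SkewBrace B where
  right_compat : ∀ a b c : B, (b + c) * a = b * a - a + c * a

theorem twoSided_star_opp_star_commute {B : Type*} [TwoSidedSkewBrace B] (a b c d : B) :
    (-a + a * d - d) + (-c + b * c - b) = (-c + b * c - b) + (-a + a * d - d) := by
  have h1 : (a + b) * (c + d) = a * c + (((-a + a * d - d) + (-c + b * c - b)) + b * d) := by
    rw [TwoSidedSkewBrace.right_compat, SkewBrace.left_compat, SkewBrace.left_compat]
    simp [sub_eq_add_neg, add_assoc, neg_add_rev]
  have h2 : (a + b) * (c + d) = a * c + (((-c + b * c - b) + (-a + a * d - d)) + b * d) := by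
    rw [SkewBrace.left_compat, TwoSidedSkewBrace.right_compat,
      TwoSidedSkewBrace.right_compat]
    simp [sub_eq_add_neg, add_assoc, neg_add_rev]
  have h3 := add_left_cancel (h1.symm.trans h2)
  exact add_right_cancel h3
end

section
/- Let B be a two-sided skew brace in which every characteristic subgroup of (B,+) is either 0 or B (e.g., B simple). If B ∗ B = B and B ∗ᵒᵖ B = B (additively generated), then the additive group (B,+) is abelian. -/
namespace TwoSidedSkewBraceProof

variable {B : Type*} [TwoSidedSkewBrace B]

/-- `lam a x = -a + a*x`, i.e. `λ_a(x)`. -/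
def lam (a x : B) : B := -a + a * x

/-- `sop c d = -d + c*d - c`, i.e. `c ∗ᵒᵖ d`. -/
def sop (c d : B) : B := -d + c * d - c

theorem lcompat (a b c : B) : a * (b + c) = a * b - a + a * c :=
  SkewBrace.left_compat a b c

theorem rcompat (a b c : B) : (b + c) * a = b * a - a + c * a :=
  TwoSidedSkewBrace.right_compat a b c

theorem mul_zero' (a : B) : a * (0 : B) = a := by
  have h := lcompat a 0 0
  rw [add_zero] at h
  have h2 : a * (0:B) - a = 0 := by
    have := congrArg (fun x => x - a * (0:B)) h
    simpa [sub_eq_add_neg, add_assoc] using this.symm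
  have := congrArg (fun x => x + a) h2
  simpa [sub_eq_add_neg, add_assoc] using this

theorem zero_mul' (a : B) : (0 : B) * a = a := by
  rw [← SkewBrace.one_eq_zero, one_mul]

theorem mul_neg' (a b : B) : a * (-b) = a - a * b + a := by
  have h := lcompat a b (-b)
  rw [add_neg_cancel, mul_zero'] at h
  -- h : a = a * b - a + a * (-b)
  have := congrArg (fun x => -(a*b - a) + x) h
  simpa [sub_eq_add_neg, add_assoc, neg_add_rev] using this.symm

theorem lam_add (a x y : B) : lam a (x + y) = lam a x + lam a y := by
  simp only [lam, lcompat a x y, sub_eq_add_neg, add_assoc]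

theorem lam_zero (a : B) : lam a (0 : B) = 0 := by
  simp [lam, mul_zero']

theorem lam_neg (a x : B) : lam a (-x) = -(lam a x) := by
  have h := lam_add a x (-x)
  rw [add_neg_cancel, lam_zero] at h
  have := congrArg (fun y => -(lam a x) + y) h.symm
  simpa [add_assoc] using this

theorem lam_lam (a b x : B) : lam a (lam b x) = lam (a * b) x := by
  simp only [lam, lcompat, mul_neg', ← mul_assoc, sub_eq_add_neg, neg_add_rev]
  simp [add_assoc]

theorem lam_one (x : B) : lam (1 : B) x = x := by
  rw [lam, one_mul, SkewBrace.one_eq_zero, neg_zero, zero_add]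

theorem lam_inv_cancel (a x : B) : lam a (lam a⁻¹ x) = x := by
  rw [lam_lam, mul_inv_cancel, lam_one]

/-- Key identity from right compatibility: `u * (x * d) = u*d - d + (-u + u*x)*d`. -/
theorem key_mul (u x d : B) : u * (x * d) = u * d - d + (-u + u * x) * d := by
  have h1 : u + (-u + u * x) = u * x := by simp [← add_assoc]
  have h2 := rcompat d u (-u + u * x)
  rw [h1] at h2
  rw [← mul_assoc, h2]

/-- E3 : `λ_u (x ∗ᵒᵖ d) = (λ_u x) ∗ᵒᵖ d`. -/
theorem E3 (u x d : B) : lam u (sop x d) = sop (lam u x) d := by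
  have : sop x d = -d + (x * d + -x) := by simp [sop, sub_eq_add_neg, add_assoc]
  rw [this, lam_add, lam_add, lam_neg, lam_neg]
  simp only [lam, key_mul u x d]
  simp only [sop, lam, sub_eq_add_neg, neg_add_rev, neg_neg]
  simp [add_assoc]

/-- F5 : `-b + (c ∗ᵒᵖ d) + b = c ∗ᵒᵖ (d + b) - c ∗ᵒᵖ b`. -/
theorem F5 (c d b : B) : -b + sop c d + b = sop c (d + b) - sop c b := by
  simp only [sop, lcompat c d b, sub_eq_add_neg, neg_add_rev, neg_neg]
  simp [add_assoc]

/-- The central commutation identity: star values commute with op-star values. -/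
theorem main_comm (a b c d : B) :
    (-a + a * b - b) + sop c d = sop c d + (-a + a * b - b) := by
  set s : B := -a + a * b - b with hs
  have hsl : s = lam a b + -b := by simp [hs, lam, sub_eq_add_neg, add_assoc]
  set c₁ : B := lam a⁻¹ c with hc₁
  have hc : lam a c₁ = c := lam_inv_cancel a c
  -- compute s + sop c d - s = sop c d
  have key : s + sop c d - s = sop c d := by
    have e1 : s + sop c d - s = lam a b + (-b + sop c d + b) + -(lam a b) := by
      rw [hsl]
      simp [sub_eq_add_neg, add_assoc, neg_add_rev]
    rw [F5 c d b] at e1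
    have e2 : sop c (d + b) = lam a (sop c₁ (d + b)) := by rw [E3, hc]
    have e3 : sop c b = lam a (sop c₁ b) := by rw [E3, hc]
    rw [e2, e3] at e1
    have e4 : lam a b + (lam a (sop c₁ (d + b)) - lam a (sop c₁ b)) + -(lam a b)
        = lam a (b + (sop c₁ (d + b) - sop c₁ b) + -b) := by
      simp [lam_add, lam_neg, sub_eq_add_neg, add_assoc]
    rw [e4] at e1
    have e5 : sop c₁ (d + b) - sop c₁ b = -b + sop c₁ d + b := by
      rw [← F5 c₁ d b]
    rw [e5] at e1
    have e6 : b + (-b + sop c₁ d + b) + -b = sop c₁ d := by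
      simp [add_assoc]
    rw [e6] at e1
    rw [e1, E3, hc]
  have := congrArg (fun x => x + s) key
  simpa [sub_eq_add_neg, add_assoc] using this

end TwoSidedSkewBraceProof

theorem twoSided_char_simple_add_abelian {B : Type*} [TwoSidedSkewBrace B]
    (hchar : ∀ H : AddSubgroup B, H.Characteristic → H = ⊥ ∨ H = ⊤)
    (hstar : AddSubgroup.closure {x : B | ∃ a b : B, x = -a + a * b - b} = ⊤)
    (hstarop : AddSubgroup.closure {x : B | ∃ a b : B, x = -b + a * b - a} = ⊤) :
    ∀ a b : B, a + b = b + a := by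
  classical
  set S' : Set B := {x : B | ∃ a b : B, x = -b + a * b - a} with hS'
  -- Step 1: the centralizer of S' is all of B
  have hcent : AddSubgroup.centralizer S' = (⊤ : AddSubgroup B) := by
    rw [← top_le_iff, ← hstar]
    rw [AddSubgroup.closure_le]
    rintro x ⟨a, b, rfl⟩
    rw [SetLike.mem_coe, AddSubgroup.mem_centralizer_iff]
    rintro t ⟨c, d, rfl⟩
    exact (TwoSidedSkewBraceProof.main_comm a b c d).symm
  -- Step 2: hence every element of S' is central
  have hcen : AddSubgroup.center B = (⊤ : AddSubgroup B) := by
    rw [← top_le_iff, ← hstarop]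
    rw [AddSubgroup.closure_le]
    rintro t ⟨c, d, rfl⟩
    rw [SetLike.mem_coe, AddSubgroup.mem_center_iff]
    intro g
    have hg : g ∈ AddSubgroup.centralizer S' := by rw [hcent]; trivial
    exact (AddSubgroup.mem_centralizer_iff.mp hg _ ⟨c, d, rfl⟩).symm
  intro a b
  have ha : a ∈ AddSubgroup.center B := by rw [hcen]; trivial
  exact (AddSubgroup.mem_center_iff.mp ha b).symm
end

section
/- Let B be a finite skew brace whose additive group (B,+) is nilpotent. Then for every prime p dividing |B|, there exists a subbrace of B of order p. -/
theorem IsPGroup.exists_addOrderOf_eq_prime_forall_smul_eq {p : ℕ} [Fact p.Prime]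
    {G A : Type*} [Group G] [AddGroup A] [Finite A] [DistribMulAction G A]
    (hG : IsPGroup p G) (hA : p ∣ Nat.card A) :
    ∃ x : A, addOrderOf x = p ∧ ∀ g : G, g • x = x := by
  have hfix : p ∣ Nat.card (FixedPoints.addSubgroup G A) :=
    Nat.modEq_zero_iff_dvd.mp
      ((hG.card_modEq_card_fixedPoints A).symm.trans (Nat.modEq_zero_iff_dvd.mpr hA))
  obtain ⟨x, hx⟩ := exists_prime_addOrderOf_dvd_card' p hfix
  exact ⟨x, (AddSubgroup.addOrderOf_coe x).trans hx, x.2⟩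

namespace SkewBrace

variable {B : Type*} [SkewBrace B]

theorem mul_zero (a : B) : a * 0 = a := by
  have h := left_compat a 0 0
  rwa [add_zero, eq_comm, add_eq_right, sub_eq_zero] at h

theorem mul_neg (a b : B) : a * -b = a - a * b + a := by
  have h := left_compat a b (-b)
  rw [add_neg_cancel, mul_zero] at h
  rw [eq_neg_add_of_add_eq h.symm, neg_sub]

def lam (a : B) : B →+ B :=
  AddMonoidHom.mk' (fun b => -a + a * b) fun b c => by
    simp only [left_compat, sub_eq_add_neg, add_assoc]

theorem lam_apply (a b : B) : lam a b = -a + a * b := rfl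

theorem mul_eq_add_lam (a b : B) : a * b = a + lam a b := by
  rw [lam_apply, add_neg_cancel_left]

theorem lam_one (b : B) : lam 1 b = b := by
  rw [lam_apply, one_mul, one_eq_zero, neg_zero, zero_add]

theorem lam_mul (a b c : B) : lam (a * b) c = lam a (lam b c) := by
  simp only [lam_apply, left_compat, mul_neg, mul_assoc, sub_eq_add_neg, add_assoc,
    neg_add_cancel_left, add_neg_cancel_left]

def lamEquiv (a : B) : B ≃+ B :=
  { lam a with
    invFun := lam a⁻¹
    left_inv := fun x => by show lam a⁻¹ (lam a x) = x; rw [← lam_mul, inv_mul_cancel, lam_one]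
    right_inv := fun x => by show lam a (lam a⁻¹ x) = x; rw [← lam_mul, mul_inv_cancel, lam_one] }

theorem lam_mem_toAddSubgroup' (P : Subgroup (Multiplicative B)) [P.Characteristic] (a : B)
    {x : B} (hx : x ∈ P.toAddSubgroup') : lam a x ∈ P.toAddSubgroup' :=
  Subgroup.characteristic_iff_le_comap.mp ‹_› (lamEquiv a).toMultiplicative hx

section Subbrace

variable (H : AddSubgroup B) (hH : ∀ a ∈ H, ∀ x ∈ H, lam a x ∈ H)

def subbraceSubmonoid : Submonoid B where
  carrier := H
  one_mem' := by rw [one_eq_zero]; exact H.zero_mem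
  mul_mem' {a b} ha hb := by rw [mul_eq_add_lam]; exact H.add_mem ha (hH a ha b hb)

variable [Finite B]

def subbraceSubgroup : Subgroup B where
  __ := subbraceSubmonoid H hH
  inv_mem' {a} ha := by
    have : a⁻¹ ∈ Submonoid.powers a :=
      (isOfFinOrder_of_finite a).mem_powers_iff_mem_zpowers.mpr (inv_mem (Subgroup.mem_zpowers a))
    exact Submonoid.powers_le.mpr ha this

theorem coe_subbraceSubgroup : (subbraceSubgroup H hH : Set B) = H := rfl

abbrev subbraceLamAction : DistribMulAction (subbraceSubgroup H hH) H where
  smul a x := ⟨lam (a : B) x, hH a a.2 x x.2⟩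
  one_smul x := Subtype.ext (lam_one (x : B))
  mul_smul a b x := Subtype.ext (lam_mul (a : B) b x)
  smul_zero a := Subtype.ext (map_zero (lam (a : B)))
  smul_add a x y := Subtype.ext (map_add (lam (a : B)) (x : B) y)

theorem exists_addOrderOf_eq_prime_forall_lam_eq {p : ℕ} [Fact p.Prime]
    (hpgroup : IsPGroup p (subbraceSubgroup H hH)) (hdvd : p ∣ Nat.card H) :
    ∃ x ∈ H, addOrderOf x = p ∧ ∀ a ∈ H, lam a x = x := by
  let := subbraceLamAction H hH
  obtain ⟨x, hx, hfix⟩ := hpgroup.exists_addOrderOf_eq_prime_forall_smul_eq hdvd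
  exact ⟨x, x.2, (AddSubgroup.addOrderOf_coe x).trans hx,
    fun a ha => congrArg Subtype.val (hfix ⟨a, ha⟩)⟩

end Subbrace

theorem lam_mem_zmultiples_of_forall_lam_eq {x : B}
    (hx : ∀ a ∈ AddSubgroup.zmultiples x, lam a x = x) :
    ∀ a ∈ AddSubgroup.zmultiples x, ∀ y ∈ AddSubgroup.zmultiples x,
      lam a y ∈ AddSubgroup.zmultiples x := by
  rintro a ha _ ⟨n, rfl⟩
  rw [map_zsmul, hx a ha]
  exact AddSubgroup.zsmul_mem_zmultiples x n

end SkewBrace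

open SkewBrace

theorem skewBrace_cauchy_of_nilpotent_add {B : Type*} [SkewBrace B] [Fintype B]
    (hnil : Group.IsNilpotent (Multiplicative B)) :
    ∀ p : ℕ, p.Prime → p ∣ Nat.card B →
      ∃ (A : AddSubgroup B) (M : Subgroup B),
        (A : Set B) = (M : Set B) ∧ Nat.card A = p := by
  intro p hp hdvd
  have := Fact.mk hp
  obtain ⟨P⟩ : Nonempty (Sylow p (Multiplicative B)) := inferInstance
  have := P.characteristic_of_normal inferInstance
  have hlam : ∀ a ∈ P.toAddSubgroup', ∀ x ∈ P.toAddSubgroup', lam a x ∈ P.toAddSubgroup' :=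
    fun a _ _ => lam_mem_toAddSubgroup' P a
  obtain ⟨n, hcard⟩ := IsPGroup.iff_card.mp P.isPGroup'
  obtain ⟨x, hxP, hxp, hfix⟩ := exists_addOrderOf_eq_prime_forall_lam_eq _ hlam
    (IsPGroup.of_card hcard) (P.dvd_card_of_dvd_card hdvd)
  have hfix_zmultiples : ∀ a ∈ AddSubgroup.zmultiples x, lam a x = x :=
    fun a ha => hfix a (AddSubgroup.zmultiples_le_of_mem hxP ha)
  exact ⟨_, subbraceSubgroup _ (lam_mem_zmultiples_of_forall_lam_eq hfix_zmultiples),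
    (coe_subbraceSubgroup _ _).symm,
    (Nat.card_zmultiples x).trans hxp⟩
end

section
/- Let B be a finite bi-skew brace. Then for every prime p dividing |B|, there exists a subbrace S of B with |S| = p (Cauchy's theorem for bi-skew braces). -/
class BiSkewBrace (B : Type*) extends SkewBrace B where
  op_compat : ∀ a b c : B, a + b * c = (a + b) * a⁻¹ * (a + c)

namespace SkewBrace

variable {B : Type*} [SkewBrace B]

def lambda (a x : B) : B := -a + a * x

theorem mul_eq_add_lambda (a x : B) : a * x = a + lambda a x := by
  rw [lambda, add_neg_cancel_left]

theorem lambda_eq_mul_add (a x : B) : lambda a x = a * (a⁻¹ + x) := by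
  rw [left_compat, mul_inv_cancel, one_eq_zero, zero_sub, lambda]

theorem lambda_add (a x y : B) : lambda a (x + y) = lambda a x + lambda a y := by
  simp only [lambda, left_compat, sub_eq_add_neg, add_assoc]

theorem lambda_zero (a : B) : lambda a 0 = 0 := by
  rw [lambda, ← one_eq_zero, mul_one, neg_add_cancel, one_eq_zero]

theorem lambda_one (a : B) : lambda a 1 = 1 := by
  rw [one_eq_zero, lambda_zero]

theorem lambda_neg (a x : B) : lambda a (-x) = -lambda a x :=
  eq_neg_of_add_eq_zero_left <| by rw [← lambda_add, neg_add_cancel, lambda_zero]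

theorem lambda_nsmul (a x : B) (n : ℕ) : lambda a (n • x) = n • lambda a x := by
  induction n with
  | zero => rw [zero_nsmul, zero_nsmul, lambda_zero]
  | succ n ih => rw [succ_nsmul, lambda_add, ih, succ_nsmul]

@[simp]
theorem one_lambda (x : B) : lambda 1 x = x := by
  rw [lambda, one_mul, one_eq_zero, neg_zero, zero_add]

theorem lambda_lambda (a b x : B) : lambda a (lambda b x) = lambda (a * b) x :=
  add_left_cancel <| calc
    a * b + lambda a (lambda b x) = a + lambda a b + lambda a (lambda b x) := by
      rw [mul_eq_add_lambda a b]
    _ = a * (b * x) := by rw [add_assoc, ← lambda_add, ← mul_eq_add_lambda, ← mul_eq_add_lambda]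
    _ = a * b + lambda (a * b) x := by rw [← mul_assoc, mul_eq_add_lambda (a * b)]

def lambdaHom : B →* Equiv.Perm B where
  toFun a :=
    { toFun := lambda a
      invFun := lambda a⁻¹
      left_inv x := by rw [lambda_lambda, inv_mul_cancel, one_lambda]
      right_inv x := by rw [lambda_lambda, mul_inv_cancel, one_lambda] }
  map_one' := Equiv.ext one_lambda
  map_mul' a b := Equiv.ext fun x => (lambda_lambda a b x).symm

@[simp]
theorem lambdaHom_apply (a x : B) : lambdaHom a x = lambda a x := rfl

theorem pow_eq_nsmul_of_lambda_self {c : B} (hc : lambda c c = c) (n : ℕ) : c ^ n = n • c := by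
  induction n with
  | zero => rw [pow_zero, zero_nsmul, one_eq_zero]
  | succ n ih => rw [pow_succ', ih, mul_eq_add_lambda, lambda_nsmul, hc, succ_nsmul']

theorem coe_zpowers_eq_zmultiples_of_lambda_self [Finite B] {c : B} (hc : lambda c c = c) :
    (Subgroup.zpowers c : Set B) = AddSubgroup.zmultiples c := by
  rw [← powers_eq_zpowers, ← multiples_eq_zmultiples, Submonoid.coe_powers,
    AddSubmonoid.coe_multiples, funext (pow_eq_nsmul_of_lambda_self hc)]

end SkewBrace

namespace BiSkewBrace

open SkewBrace

variable {B : Type*} [BiSkewBrace B]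

abbrev _root_.Subgroup.toBiSkewBrace (H : Subgroup B)
    (add_mem : ∀ {x y : B}, x ∈ H → y ∈ H → x + y ∈ H) (neg_mem : ∀ {x : B}, x ∈ H → -x ∈ H) :
    BiSkewBrace H :=
  let A : AddSubgroup B :=
    { carrier := H
      add_mem' := add_mem
      zero_mem' := one_eq_zero (B := B) ▸ H.one_mem
      neg_mem' := neg_mem }
  letI : AddGroup H := A.toAddGroup
  { toGroup := H.toGroup
    one_eq_zero := Subtype.ext one_eq_zero
    left_compat a b c := Subtype.ext (left_compat (a : B) b c)
    op_compat a b c := Subtype.ext (op_compat (a : B) b c) }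

-- `op_compat` at `a⁻¹` reads `a⁻¹ + x * y = (a⁻¹ + x) * a * (a⁻¹ + y)`.
theorem lambda_mul (a x y : B) : lambda a (x * y) = lambda a x * lambda a y := by
  simp only [lambda_eq_mul_add, op_compat, inv_inv, mul_assoc]

theorem lambda_inv (a x : B) : lambda a x⁻¹ = (lambda a x)⁻¹ :=
  eq_inv_of_mul_eq_one_left <| by rw [← lambda_mul, inv_mul_cancel, lambda_one]

def lambdaFixed (P : Subgroup B) : Subgroup B where
  carrier := {x | ∀ a ∈ P, lambda a x = x}
  one_mem' a _ := lambda_one a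
  mul_mem' hx hy a ha := by rw [lambda_mul, hx a ha, hy a ha]
  inv_mem' hx a ha := by rw [lambda_inv, hx a ha]

theorem mem_lambdaFixed {P : Subgroup B} {x : B} :
    x ∈ lambdaFixed P ↔ ∀ a ∈ P, lambda a x = x :=
  Iff.rfl

theorem add_mem_lambdaFixed {P : Subgroup B} {x y : B} (hx : x ∈ lambdaFixed P)
    (hy : y ∈ lambdaFixed P) : x + y ∈ lambdaFixed P := fun a ha => by
  rw [lambda_add, hx a ha, hy a ha]

theorem neg_mem_lambdaFixed {P : Subgroup B} {x : B} (hx : x ∈ lambdaFixed P) :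
    -x ∈ lambdaFixed P := fun a ha => by
  rw [lambda_neg, hx a ha]

theorem coe_lambdaFixed (P : Subgroup B) :
    (lambdaFixed P : Set B) = MulAction.fixedPoints (P.map lambdaHom) B := by
  ext x
  simp [mem_lambdaFixed, MulAction.mem_fixedPoints, Subgroup.smul_def]

theorem card_modEq_card_lambdaFixed [Finite B] {p : ℕ} [Fact p.Prime] {P : Subgroup B}
    (hP : IsPGroup p P) : Nat.card B ≡ Nat.card (lambdaFixed P) [MOD p] := by
  rw [← SetLike.coe_sort_coe, coe_lambdaFixed]
  exact (hP.map lambdaHom).card_modEq_card_fixedPoints B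

theorem exists_orderOf_eq_prime_lambda_self {p : ℕ} [Fact p.Prime] (B : Type*)
    [BiSkewBrace B] [Finite B] (hdvd : p ∣ Nat.card B) :
    ∃ c : B, orderOf c = p ∧ lambda c c = c := by
  induction h : Nat.card B using Nat.strong_induction_on generalizing B with
  | _ n ih =>
  subst h
  obtain ⟨P⟩ : Nonempty (Sylow p B) := inferInstance
  by_cases hfix : lambdaFixed (P : Subgroup B) = ⊤
  · obtain ⟨a, ha⟩ := exists_prime_orderOf_dvd_card' (G := P) p (P.dvd_card_of_dvd_card hdvd)
    exact ⟨a, (Subgroup.orderOf_coe a).trans ha, (hfix ▸ Subgroup.mem_top (a : B)) a a.2⟩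
  · let := (lambdaFixed (P : Subgroup B)).toBiSkewBrace add_mem_lambdaFixed neg_mem_lambdaFixed
    have hlt : Nat.card (lambdaFixed (P : Subgroup B)) < Nat.card B :=
      Subgroup.card_le_card_group _ |>.lt_of_ne (mt (Subgroup.card_eq_iff_eq_top _).mp hfix)
    have hdvd' : p ∣ Nat.card (lambdaFixed (P : Subgroup B)) :=
      ((card_modEq_card_lambdaFixed P.isPGroup').dvd_iff dvd_rfl).mp hdvd
    obtain ⟨c, hc, hcc⟩ := ih _ hlt _ hdvd' rfl
    exact ⟨c, (Subgroup.orderOf_coe c).trans hc, congrArg Subtype.val hcc⟩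

end BiSkewBrace

open SkewBrace BiSkewBrace in
theorem biSkew_cauchy {B : Type*} [BiSkewBrace B] [Fintype B] :
    ∀ p : ℕ, p.Prime → p ∣ Nat.card B →
      ∃ (A : AddSubgroup B) (M : Subgroup B),
        (A : Set B) = (M : Set B) ∧ Nat.card A = p := by
  intro p hp hdvd
  have := Fact.mk hp
  obtain ⟨c, hc, hcc⟩ := exists_orderOf_eq_prime_lambda_self B hdvd
  have hcoe := coe_zpowers_eq_zmultiples_of_lambda_self hcc
  refine ⟨AddSubgroup.zmultiples c, Subgroup.zpowers c, hcoe.symm, ?_⟩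
  exact (Nat.card_congr (Equiv.setCongr hcoe.symm)).trans ((Nat.card_zpowers c).trans hc)
end

section
/- Let B be a bi-skew brace. Then each λ_a (defined by λ_a(b) = -a + a·b) is also an automorphism of the multiplicative group (B,·): λ_a(b·c) = λ_a(b)·λ_a(c) for all a,b,c ∈ B. -/
theorem biSkew_lambda_mul_aut {B : Type*} [BiSkewBrace B] (a b c : B) :
    -a + a * (b * c) = (-a + a * b) * (-a + a * c) := by
  have lam : ∀ x : B, -a + a * x = a * (a⁻¹ + x) := by
    intro x
    rw [SkewBrace.left_compat, mul_inv_cancel, SkewBrace.one_eq_zero, zero_sub]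
  rw [lam, lam, lam, BiSkewBrace.op_compat, inv_inv, mul_assoc, mul_assoc]
end

section
/- Let B be a bi-skew brace and let a ∈ B satisfy λ_a = id (i.e., a·b = a + b for all b ∈ B). Then a ∗ b = 0 for every b ∈ B, where a ∗ b = -a + a·b - b. Consequently, in a simple bi-skew brace, if ker λ ≠ 0 then ker λ = B, hence a simple bi-skew brace is either trivial or almost trivial. -/
def SkewBrace.IsIdeal {B : Type*} [SkewBrace B] (I : Set B) : Prop :=
  ∃ (A : AddSubgroup B) (M : Subgroup B),
    (A : Set B) = I ∧ (M : Set B) = I ∧ A.Normal ∧ M.Normal ∧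
    ∀ a : B, ∀ x ∈ I, -a + a * x ∈ I

section Aux
variable {B : Type*} [BiSkewBrace B]

lemma BSB.zero_mul' (b : B) : (0 : B) * b = b := by
  rw [← SkewBrace.one_eq_zero, one_mul]

/-- key identity: (x+y)*c = x + y*(-x + x*c) -/
lemma BSB.key (x y c : B) : (x + y) * c = x + y * (-x + x * c) := by
  have h := BiSkewBrace.op_compat x y (-x + x * c)
  rw [add_neg_cancel_left] at h
  rw [h, mul_assoc, inv_mul_cancel_left]

/-- x * (x + (-x)*c) = x + c -/
lemma BSB.lam_inv (x c : B) : x * (x + (-x) * c) = x + c := by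
  have h := BSB.key (-x) x c
  rw [neg_add_cancel, BSB.zero_mul', neg_neg] at h
  have h' : x + c = x * (x + (-x) * c) := by
    conv_lhs => rw [h, add_neg_cancel_left]
  exact h'.symm

/-- (-x)*(-x + x*c) = -x + c -/
lemma BSB.neg_lam (x c : B) : (-x) * (-x + x * c) = -x + c := by
  have h := BSB.key x (-x) c
  rw [add_neg_cancel, BSB.zero_mul'] at h
  have h' : -x + c = (-x) * (-x + x * c) := by
    conv_lhs => rw [h, neg_add_cancel_left]
  exact h'.symm

lemma BSB.neg_mem {x : B} (hx : ∀ b : B, x * b = x + b) (b : B) :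
    (-x) * b = -x + b := by
  have h := BSB.lam_inv x b
  rw [hx] at h
  have h2 : x + (-x) * b = b := add_left_cancel h
  conv_rhs => rw [← h2, neg_add_cancel_left]

lemma BSB.kerIdeal : SkewBrace.IsIdeal {a : B | ∀ b : B, a * b = a + b} := by
  set K := {a : B | ∀ b : B, a * b = a + b} with hK
  have memK : ∀ a : B, a ∈ K ↔ ∀ b : B, a * b = a + b := fun a => Iff.rfl
  refine ⟨{ carrier := K
            zero_mem' := by
              intro b
              rw [BSB.zero_mul', zero_add]
            add_mem' := by
              intro x y hx hy b
              rw [BSB.key, hx, neg_add_cancel_left, hy, add_assoc]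
            neg_mem' := by
              intro x hx b
              exact BSB.neg_mem hx b },
          { carrier := K
            one_mem' := by
              intro b
              rw [one_mul, SkewBrace.one_eq_zero, zero_add]
            mul_mem' := by
              intro x y hx hy b
              rw [mul_assoc, hy, hx, hx y, add_assoc]
            inv_mem' := by
              intro x hx b
              have hxinv : x⁻¹ = -x := by
                have := hx x⁻¹
                rw [mul_inv_cancel, SkewBrace.one_eq_zero] at this
                exact neg_eq_of_add_eq_zero_right this.symm |>.symm
              rw [hxinv]
              exact BSB.neg_mem hx b },
          rfl, rfl, ?_, ?_, ?_⟩
  · constructor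
    intro x hx g b
    have h1 : (g + x) * b = (g + x) + (-g + g * b) := by
      rw [BSB.key, hx, ← add_assoc]
    rw [BSB.key (g + x) (-g) b, h1, neg_add_cancel_left, BSB.neg_lam,
      add_assoc (g + x) (-g) b]
  · constructor
    intro x hx g b
    have h1 : ∀ c : B, (g * x * g⁻¹) * c = g * x - g + c := by
      intro c
      rw [mul_assoc, mul_assoc, hx, SkewBrace.left_compat, mul_inv_cancel_left]
    have h2 : g * x * g⁻¹ = g * x - g := by
      have := h1 0
      rwa [← SkewBrace.one_eq_zero, mul_one, SkewBrace.one_eq_zero, add_zero] at this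
    rw [h1, h2]
  · intro a x hx b
    have h1 : (-a + a * x) * b = -a + (a * x) * (a + (-a) * b) := by
      rw [BSB.key, neg_neg]
    rw [h1, mul_assoc, hx, SkewBrace.left_compat, BSB.lam_inv]
    simp [sub_eq_add_neg, add_assoc]

lemma BSB.d_mem (a b : B) :
    (-(b + a) + a * b) ∈ {z : B | ∀ c : B, z * c = z + c} := by
  intro c
  have h1 : (-(b + a) + a * b) * c
      = -(b + a) + (a * b) * ((b + a) + (-(b + a)) * c) := by
    rw [BSB.key, neg_neg]
  set u := (b + a) + (-(b + a)) * c with hu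
  have h2 : (b + a) * u = (b + a) + c := BSB.lam_inv (b + a) c
  have h3 : (b + a) * u = b + a * (-b + b * u) := BSB.key b a u
  have h4 : a * (-b + b * u) = a + c := by
    have := h3.symm.trans h2
    have h5 := congrArg (fun z => -b + z) this
    rw [neg_add_cancel_left] at h5
    rw [add_assoc b a c, neg_add_cancel_left] at h5
    exact h5
  have h6 : a * (b * u) = a * b + c := by
    have hb : b * u = b + (-b + b * u) := by rw [add_neg_cancel_left]
    rw [hb, SkewBrace.left_compat, h4, sub_eq_add_neg, add_assoc,
      neg_add_cancel_left]
  rw [h1, ← mul_assoc] at *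
  rw [h6, ← add_assoc]

end Aux

theorem biSkew_ker_lambda_star_zero {B : Type*} [BiSkewBrace B] :
    (∀ a : B, (∀ b : B, a * b = a + b) → ∀ b : B, -a + a * b - b = 0) ∧
    ((∀ I : Set B, SkewBrace.IsIdeal I → I = {0} ∨ I = Set.univ) →
      (({a : B | ∀ b : B, a * b = a + b} ≠ {0}) →
          {a : B | ∀ b : B, a * b = a + b} = Set.univ) ∧
      ((∀ a b : B, a * b = a + b) ∨ (∀ a b : B, a * b = b + a))) := by
  constructor
  · intro a ha b
    rw [ha b, neg_add_cancel_left, sub_eq_add_neg, add_neg_cancel]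
  · intro hS
    rcases hS _ BSB.kerIdeal with h0 | huniv
    · refine ⟨fun h => absurd h0 h, Or.inr fun a b => ?_⟩
      have hd := BSB.d_mem a b
      rw [h0] at hd
      have h : -(b + a) + a * b = 0 := hd
      exact (neg_add_eq_zero.mp h).symm
    · refine ⟨fun _ => huniv, Or.inl fun a b => ?_⟩
      have ha : a ∈ {a : B | ∀ b : B, a * b = a + b} := by
        rw [huniv]; trivial
      exact ha b
end
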